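/- Suppose max V − ∫₀¹ V(x) dx < 1. Then there exists J > 0 such that α⁺(j) ≤ 1 for all 0 < j ≤ J; for such j, let H̄_j be the unique H ≥ H_j^{cr} with ∫₀¹ m⁺_H(x) dx = 1, set m_j := m⁺_{H̄_j} and p_j := ∫₀¹ j/m_j(y) dy. Then, as j → 0⁺: H̄_j → 1 + ∫₀¹ V(x) dx, m_j(x) → 1 + ∫₀¹ V(y) dy − V(x) for every x ∈ ℝ, and p_j → 0. -/

import Mathlib

open MeasureTheory Filter

/-!
On the large branch the kinetic term `j²/(2m²)` is at most `j^{2/3}/2`, because `m ≥ j^{2/3}`.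
Hence `H - V(x) - j^{2/3}/2 ≤ m⁺_H(x) ≤ H - V(x)`, and integrating over a period traps every
level with unit mass in `[1 + ∫V, 1 + ∫V + j^{2/3}/2]`. All three limits follow by squeezing,
the last one from `j / m_j ≤ j / j^{2/3} = j^{1/3}`.
-/

def IsUpperBranch (V : ℝ → ℝ) (M : ℝ) (mp : ℝ → ℝ → ℝ → ℝ) : Prop :=
  ∀ j H x, 0 < j → M + 3 / 2 * j ^ ((2:ℝ)/3) ≤ H →
    j ^ ((2:ℝ)/3) ≤ mp j H x ∧ j ^ 2 / (2 * (mp j H x) ^ 2) + mp j H x = H - V x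

lemma Real.rpow_two_div_three_pow_three {j : ℝ} (hj : 0 ≤ j) :
    (j ^ ((2:ℝ)/3)) ^ 3 = j ^ 2 := by
  rw [← Real.rpow_natCast, ← Real.rpow_mul hj]
  norm_num

lemma Real.div_rpow_two_div_three {j : ℝ} (hj : 0 < j) :
    j / j ^ ((2:ℝ)/3) = j ^ ((1:ℝ)/3) := by
  rw [show (1:ℝ)/3 = 1 - 2/3 by norm_num, Real.rpow_sub hj, Real.rpow_one]

lemma Real.tendsto_rpow_nhdsGT_zero {e : ℝ} (he : 0 < e) :
    Tendsto (fun j : ℝ => j ^ e) (nhdsWithin 0 (Set.Ioi 0)) (nhds 0) :=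
  ((Real.continuous_rpow_const he.le).tendsto' 0 0 (Real.zero_rpow he.ne')).mono_left
    nhdsWithin_le_nhds

lemma cube_div_two_mul_sq_le_half {a m : ℝ} (ha : 0 < a) (ham : a ≤ m) :
    a ^ 3 / (2 * m ^ 2) ≤ a / 2 := by
  have hsq : a ^ 2 ≤ m ^ 2 := pow_le_pow_left₀ ha.le ham 2
  rw [div_le_div_iff₀ (by nlinarith) two_pos]
  nlinarith [mul_le_mul_of_nonneg_left hsq ha.le]

lemma intervalIntegral.integral_const_sub_of_intervalIntegrable {f : ℝ → ℝ} {a b : ℝ}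
    (hf : IntervalIntegrable f volume a b) (c : ℝ) :
    ∫ x in a..b, (c - f x) = c * (b - a) - ∫ x in a..b, f x := by
  rw [intervalIntegral.integral_sub intervalIntegrable_const hf, intervalIntegral.integral_const,
    smul_eq_mul, mul_comm]

namespace IsUpperBranch

variable {V : ℝ → ℝ} {M : ℝ} {mp : ℝ → ℝ → ℝ → ℝ} {j H : ℝ}

lemma bounds (hmp : IsUpperBranch V M mp) (hj : 0 < j) (hH : M + 3 / 2 * j ^ ((2:ℝ)/3) ≤ H)
    (x : ℝ) : H - V x - j ^ ((2:ℝ)/3) / 2 ≤ mp j H x ∧ mp j H x ≤ H - V x := by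
  obtain ⟨hlow, heq⟩ := hmp j H x hj hH
  have ha : 0 < j ^ ((2:ℝ)/3) := Real.rpow_pos_of_pos hj _
  have hkin : j ^ 2 / (2 * (mp j H x) ^ 2) ≤ j ^ ((2:ℝ)/3) / 2 := by
    rw [← Real.rpow_two_div_three_pow_three hj.le]
    exact cube_div_two_mul_sq_le_half ha hlow
  have hpos : 0 ≤ j ^ 2 / (2 * (mp j H x) ^ 2) := by positivity
  constructor <;> linarith

lemma integral_bounds (hmp : IsUpperBranch V M mp) (hV : IntervalIntegrable V volume 0 1)
    (hj : 0 < j) (hH : M + 3 / 2 * j ^ ((2:ℝ)/3) ≤ H)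
    (hint : IntervalIntegrable (mp j H) volume 0 1) :
    H - (∫ x in (0:ℝ)..1, V x) - j ^ ((2:ℝ)/3) / 2 ≤ ∫ x in (0:ℝ)..1, mp j H x ∧
      ∫ x in (0:ℝ)..1, mp j H x ≤ H - ∫ x in (0:ℝ)..1, V x := by
  have hcV : ∀ c, IntervalIntegrable (fun x => c - V x) volume 0 1 :=
    fun c => intervalIntegrable_const.sub hV
  have hlo := intervalIntegral.integral_mono_on zero_le_one (hcV (H - j ^ ((2:ℝ)/3) / 2)) hint
    fun x _ => by linarith [(hmp.bounds hj hH x).1]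
  have hhi := intervalIntegral.integral_mono_on zero_le_one hint (hcV H)
    fun x _ => (hmp.bounds hj hH x).2
  rw [intervalIntegral.integral_const_sub_of_intervalIntegrable hV] at hlo hhi
  constructor <;> linarith

lemma integral_critical_le_one (hmp : IsUpperBranch V M mp)
    (hV : IntervalIntegrable V volume 0 1) (hj : 0 < j)
    (hsmall : 3 / 2 * j ^ ((2:ℝ)/3) ≤ 1 - (M - ∫ x in (0:ℝ)..1, V x)) :
    ∫ x in (0:ℝ)..1, mp j (M + 3 / 2 * j ^ ((2:ℝ)/3)) x ≤ 1 := by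
  by_cases hint : IntervalIntegrable (mp j (M + 3 / 2 * j ^ ((2:ℝ)/3))) volume 0 1
  · linarith [(hmp.integral_bounds hV hj le_rfl hint).2]
  · rw [intervalIntegral.integral_undef hint]
    exact zero_le_one

lemma level_bounds (hmp : IsUpperBranch V M mp) (hV : IntervalIntegrable V volume 0 1)
    (hj : 0 < j) (hH : M + 3 / 2 * j ^ ((2:ℝ)/3) ≤ H) (hmass : ∫ x in (0:ℝ)..1, mp j H x = 1) :
    1 + ∫ x in (0:ℝ)..1, V x ≤ H ∧ H ≤ 1 + (∫ x in (0:ℝ)..1, V x) + j ^ ((2:ℝ)/3) / 2 := by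
  have hint : IntervalIntegrable (mp j H) volume 0 1 := by
    by_contra h
    rw [intervalIntegral.integral_undef h] at hmass
    exact zero_ne_one hmass
  have := hmp.integral_bounds hV hj hH hint
  rw [hmass] at this
  constructor <;> linarith

end IsUpperBranch

theorem stmt_17_general
    (V : ℝ → ℝ) (hVc : Continuous V)
    (M : ℝ)
    (hosc : M - (∫ x in (0:ℝ)..1, V x) < 1)
    (mp : ℝ → ℝ → ℝ → ℝ)
    (hmp : ∀ j H x, 0 < j → M + 3 / 2 * j ^ ((2:ℝ)/3) ≤ H →
      j ^ ((2:ℝ)/3) ≤ mp j H x ∧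
      j ^ 2 / (2 * (mp j H x) ^ 2) + mp j H x = H - V x) :
    ∃ J > 0,
      (∀ j, 0 < j → j ≤ J →
        (∫ x in (0:ℝ)..1, mp j (M + 3 / 2 * j ^ ((2:ℝ)/3)) x) ≤ 1) ∧
      ∀ Hb : ℝ → ℝ,
        (∀ j, 0 < j → j ≤ J → M + 3 / 2 * j ^ ((2:ℝ)/3) ≤ Hb j ∧
          (∫ x in (0:ℝ)..1, mp j (Hb j) x) = 1) →
        Tendsto Hb (nhdsWithin 0 (Set.Ioi 0))
          (nhds (1 + ∫ x in (0:ℝ)..1, V x)) ∧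
        (∀ x, Tendsto (fun j => mp j (Hb j) x) (nhdsWithin 0 (Set.Ioi 0))
          (nhds (1 + (∫ y in (0:ℝ)..1, V y) - V x))) ∧
        Tendsto (fun j => ∫ y in (0:ℝ)..1, j / mp j (Hb j) y)
          (nhdsWithin 0 (Set.Ioi 0)) (nhds 0) := by
  have hmp : IsUpperBranch V M mp := hmp
  have hV : IntervalIntegrable V volume 0 1 := hVc.intervalIntegrable 0 1
  set I := ∫ x in (0:ℝ)..1, V x
  have ha := Real.tendsto_rpow_nhdsGT_zero (e := 2 / 3) (by norm_num)
  have hkin : Tendsto (fun j : ℝ => 3 / 2 * j ^ ((2:ℝ)/3)) (nhdsWithin 0 (Set.Ioi 0)) (nhds 0) :=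
    by simpa using ha.const_mul (3 / 2)
  have hsmall : ∀ᶠ j in nhdsWithin 0 (Set.Ioi 0), 3 / 2 * j ^ ((2:ℝ)/3) ≤ 1 - (M - I) :=
    hkin.eventually (ge_mem_nhds (by linarith))
  obtain ⟨J, hJ, hJsmall⟩ := mem_nhdsGT_iff_exists_Ioc_subset.1 hsmall
  refine ⟨J, hJ, fun j hj hjJ => hmp.integral_critical_le_one hV hj (hJsmall ⟨hj, hjJ⟩),
    fun Hb hHb => ?_⟩
  have hlevel : ∀ᶠ j in nhdsWithin 0 (Set.Ioi 0), 0 < j ∧ M + 3 / 2 * j ^ ((2:ℝ)/3) ≤ Hb j ∧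
      1 + I ≤ Hb j ∧ Hb j ≤ 1 + I + j ^ ((2:ℝ)/3) / 2 := by
    filter_upwards [Ioc_mem_nhdsGT hJ] with j ⟨hj, hjJ⟩
    obtain ⟨hH, hmass⟩ := hHb j hj hjJ
    exact ⟨hj, hH, hmp.level_bounds hV hj hH hmass⟩
  have hHb : Tendsto Hb (nhdsWithin 0 (Set.Ioi 0)) (nhds (1 + I)) :=
    tendsto_of_tendsto_of_tendsto_of_le_of_le' tendsto_const_nhds
      (by simpa using (ha.div_const 2).const_add (1 + I))
      (hlevel.mono fun j h => h.2.2.1) (hlevel.mono fun j h => h.2.2.2)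
  refine ⟨hHb, fun x => ?_, ?_⟩
  · refine tendsto_of_tendsto_of_tendsto_of_le_of_le'
      (by simpa using (hHb.sub_const (V x)).sub (ha.div_const 2)) (hHb.sub_const (V x))
      (hlevel.mono fun j h => (hmp.bounds h.1 h.2.1 x).1)
      (hlevel.mono fun j h => (hmp.bounds h.1 h.2.1 x).2)
  · refine squeeze_zero_norm' ?_ (Real.tendsto_rpow_nhdsGT_zero (e := 1 / 3) (by norm_num))
    filter_upwards [hlevel] with j hj
    obtain ⟨hj, hH, -⟩ := hj
    have hle : ∀ y ∈ Set.uIoc (0:ℝ) 1, ‖j / mp j (Hb j) y‖ ≤ j ^ ((1:ℝ)/3) := fun y _ => by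
      have hm := (hmp j (Hb j) y hj hH).1
      rw [Real.norm_of_nonneg (div_nonneg hj.le (by linarith [Real.rpow_pos_of_pos hj ((2:ℝ)/3)])),
        ← Real.div_rpow_two_div_three hj]
      exact div_le_div_of_nonneg_left hj.le (Real.rpow_pos_of_pos hj _) hm
    simpa using intervalIntegral.norm_integral_le_of_norm_le_const hle

/-- low-current asymptotics when `max V − ∫₀¹ V < 1`. For small
`j > 0` we have `α⁺(j) ≤ 1`; letting `H̄_j ≥ H_j^{cr}` be the level with
`∫₀¹ m⁺_{H̄_j} = 1`, `m_j := m⁺_{H̄_j}` and `p_j := ∫₀¹ j/m_j`, as `j → 0⁺`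
we have `H̄_j → 1 + ∫₀¹ V`, `m_j(x) → 1 + ∫₀¹ V − V(x)`, and `p_j → 0`.
Here `mp j H x` denotes the large branch `m⁺_H(x)` of solutions of
`j²/(2t²) + t = H − V(x)`. -/
theorem stmt_17
    (V : ℝ → ℝ) (hVc : Continuous V) (hVp : Function.Periodic V 1)
    (M : ℝ) (hM : IsGreatest (Set.range V) M)
    (hosc : M - (∫ x in (0:ℝ)..1, V x) < 1)
    (mp : ℝ → ℝ → ℝ → ℝ)
    (hmp : ∀ j H x, 0 < j → M + 3 / 2 * j ^ ((2:ℝ)/3) ≤ H →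
      j ^ ((2:ℝ)/3) ≤ mp j H x ∧
      j ^ 2 / (2 * (mp j H x) ^ 2) + mp j H x = H - V x) :
    ∃ J > 0,
      (∀ j, 0 < j → j ≤ J →
        (∫ x in (0:ℝ)..1, mp j (M + 3 / 2 * j ^ ((2:ℝ)/3)) x) ≤ 1) ∧
      ∀ Hb : ℝ → ℝ,
        (∀ j, 0 < j → j ≤ J → M + 3 / 2 * j ^ ((2:ℝ)/3) ≤ Hb j ∧
          (∫ x in (0:ℝ)..1, mp j (Hb j) x) = 1) →
        Tendsto Hb (nhdsWithin 0 (Set.Ioi 0))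
          (nhds (1 + ∫ x in (0:ℝ)..1, V x)) ∧
        (∀ x, Tendsto (fun j => mp j (Hb j) x) (nhdsWithin 0 (Set.Ioi 0))
          (nhds (1 + (∫ y in (0:ℝ)..1, V y) - V x))) ∧
        Tendsto (fun j => ∫ y in (0:ℝ)..1, j / mp j (Hb j) y)
          (nhdsWithin 0 (Set.Ioi 0)) (nhds 0) :=
  stmt_17_general V hVc M hosc mp hmp
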